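/- arXiv:1502.00883 — 4 statements merged into one kernel-verified Lean document; each statement's English description precedes it below -/
import Mathlib

section
/- Let Z be an ordered *-space, H a VE-space over Z, X a nonempty set, and k : X × X → L*(H) a 2-positive kernel. Fix x, y ∈ X and nonnegative real numbers a, b such that [k(x,x)h,h]_H ≤ a·[h,h]_H and [k(y,y)h,h]_H ≤ b·[h,h]_H for all h ∈ H. Then [k(y,x)h, k(y,x)h]_H ≤ (a·b)·[h,h]_H for all h ∈ H; in particular k(y,x) is bounded in the sense of Loynes. -/
/-! Put `w = k(y,x) h`. Since 2-positivity makes `k(y,x)` the adjoint of `k(x,y)`, testing it at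
`(x, h), (y, -t • w)` gives `2t[w,w] ≤ a[h,h] + t²b[w,w]`, and `t = 1/b` yields the bound.
As `Z` need not be Archimedean, `b = 0` needs another argument: the bound with `x, y` swapped and
`a + 1 > 0` in place of `a` shows `k(x,y) = 0`, so `[w,w] = [h, k(x,y) w] = 0`. -/

noncomputable section

/-- An ordered `*`-space structure on a complex vector space `Z` with involution:
a strict cone of selfadjoint elements. -/
structure StarCone (Z : Type*) [AddCommGroup Z] [Module ℂ Z] [StarAddMonoid Z]
    [StarModule ℂ Z] where
  pos : Set Z
  zero_mem : (0 : Z) ∈ pos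
  add_mem : ∀ {x y : Z}, x ∈ pos → y ∈ pos → x + y ∈ pos
  smul_mem : ∀ {r : ℝ}, 0 ≤ r → ∀ {x : Z}, x ∈ pos → (r : ℂ) • x ∈ pos
  strict : ∀ {x : Z}, x ∈ pos → -x ∈ pos → x = 0
  star_mem : ∀ {x : Z}, x ∈ pos → star x = x

/-- The partial order induced by the cone: `a ≤ b` iff `b - a` is positive. -/
def StarCone.le {Z : Type*} [AddCommGroup Z] [Module ℂ Z] [StarAddMonoid Z] [StarModule ℂ Z]
    (O : StarCone Z) (a b : Z) : Prop :=
  b - a ∈ O.pos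

/-- A VE-space gramian on `E` over the ordered `*`-space `(Z, O)`: linear in the second
variable, Hermitian, positive and definite. -/
structure Gramian {Z : Type*} [AddCommGroup Z] [Module ℂ Z] [StarAddMonoid Z] [StarModule ℂ Z]
    (O : StarCone Z) (E : Type*) [AddCommGroup E] [Module ℂ E] where
  inner : E → E → Z
  add_right : ∀ x y z : E, inner x (y + z) = inner x y + inner x z
  smul_right : ∀ (c : ℂ) (x y : E), inner x (c • y) = c • inner x y
  conj_symm : ∀ x y : E, inner x y = star (inner y x)
  inner_self_mem : ∀ x : E, inner x x ∈ O.pos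
  definite : ∀ x : E, inner x x = 0 → x = 0

/-- A linear map `T` between VE-spaces over the same ordered `*`-space is adjointable if
it has an adjoint `S` with `[T e, f] = [e, S f]`. -/
def Adjointable {Z : Type*} [AddCommGroup Z] [Module ℂ Z] [StarAddMonoid Z] [StarModule ℂ Z]
    {O : StarCone Z} {E F : Type*} [AddCommGroup E] [Module ℂ E] [AddCommGroup F] [Module ℂ F]
    (gE : Gramian O E) (gF : Gramian O F) (T : E →ₗ[ℂ] F) : Prop :=
  ∃ S : F →ₗ[ℂ] E, ∀ (e : E) (f : F), gF.inner (T e) f = gE.inner e (S f)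

namespace StarCone

variable {Z : Type*} [AddCommGroup Z] [Module ℂ Z] [StarAddMonoid Z] [StarModule ℂ Z]
  (O : StarCone Z)

theorem le_refl (a : Z) : O.le a a := by
  simpa [StarCone.le] using O.zero_mem

theorem le_trans {a b c : Z} (hab : O.le a b) (hbc : O.le b c) : O.le a c := by
  simpa [StarCone.le] using O.add_mem hbc hab

theorem smul_le_smul {a b : Z} (hab : O.le a b) {r : ℝ} (hr : 0 ≤ r) :
    O.le ((r : ℂ) • a) ((r : ℂ) • b) := by
  simpa [StarCone.le, smul_sub] using O.smul_mem hr hab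

theorem smul_le_smul_of_le {z : Z} (hz : z ∈ O.pos) {r s : ℝ} (hrs : r ≤ s) :
    O.le ((r : ℂ) • z) ((s : ℂ) • z) := by
  simpa [StarCone.le, sub_smul] using O.smul_mem (sub_nonneg.mpr hrs) hz

theorem eq_zero_of_le_zero {z : Z} (hz : z ∈ O.pos) (hz' : O.le z 0) : z = 0 :=
  O.strict hz (by simpa [StarCone.le] using hz')

end StarCone

theorem eq_zero_of_isSelfAdjoint_of_isSelfAdjoint_I_smul {Z : Type*} [AddCommGroup Z]
    [Module ℂ Z] [StarAddMonoid Z] [StarModule ℂ Z] {z : Z} (hz : IsSelfAdjoint z)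
    (hIz : IsSelfAdjoint (Complex.I • z)) : z = 0 := by
  have h : (2 * Complex.I) • z = 0 := by
    have := hIz.star_eq
    rw [star_smul, hz.star_eq, Complex.star_def, Complex.conj_I, neg_smul, neg_eq_iff_add_eq_zero]
      at this
    rw [mul_smul, two_smul, ← this, add_comm]
  exact (smul_eq_zero.mp h).resolve_left (by simp)

namespace Gramian

variable {Z : Type*} [AddCommGroup Z] [Module ℂ Z] [StarAddMonoid Z] [StarModule ℂ Z]
  {O : StarCone Z} {E : Type*} [AddCommGroup E] [Module ℂ E] (g : Gramian O E)

theorem star_inner (x y : E) : star (g.inner x y) = g.inner y x :=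
  (g.conj_symm y x).symm

theorem inner_zero_right (x : E) : g.inner x 0 = 0 := by
  simpa using g.smul_right 0 x 0

theorem inner_zero_left (x : E) : g.inner 0 x = 0 := by
  rw [g.conj_symm, inner_zero_right, star_zero]

theorem inner_smul_left (c : ℂ) (x y : E) : g.inner (c • x) y = star c • g.inner x y := by
  rw [g.conj_symm, g.smul_right, star_smul, star_inner]

theorem eq_zero_of_inner_self_le_zero {x : E} (hx : O.le (g.inner x x) 0) : x = 0 :=
  g.definite x (O.eq_zero_of_le_zero (g.inner_self_mem x) hx)

end Gramian

section Kernel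

variable {Z : Type*} [AddCommGroup Z] [Module ℂ Z] [StarAddMonoid Z] [StarModule ℂ Z]
  {O : StarCone Z} {H : Type*} [AddCommGroup H] [Module ℂ H] {X : Type*}

def IsTwoPositive (gH : Gramian O H) (k : X → X → (H →ₗ[ℂ] H)) : Prop :=
  ∀ (x : Fin 2 → X) (h : Fin 2 → H),
    (∑ i : Fin 2, ∑ j : Fin 2, gH.inner (k (x i) (x j) (h j)) (h i)) ∈ O.pos

namespace IsTwoPositive

variable {gH : Gramian O H} {k : X → X → (H →ₗ[ℂ] H)} (hk : IsTwoPositive gH k)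
include hk

theorem inner_add_mem (p q : X) (u v : H) :
    gH.inner (k p p u) u + gH.inner (k p q v) u + gH.inner (k q p u) v
      + gH.inner (k q q v) v ∈ O.pos := by
  simpa [Fin.sum_univ_two, add_assoc] using hk ![p, q] ![u, v]

theorem inner_apply_self_mem (p : X) (u : H) : gH.inner (k p p u) u ∈ O.pos := by
  simpa [gH.inner_zero_right, gH.inner_zero_left] using hk.inner_add_mem p p u 0

theorem inner_apply_eq (p q : X) (u v : H) : gH.inner (k q p u) v = gH.inner u (k p q v) := by
  let f : H →ₗ[ℂ] Z :=
    { toFun := fun w => gH.inner (k q p u) w - gH.inner u (k p q w)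
      map_add' := fun w w' => by simp only [map_add, gH.add_right]; abel
      map_smul' := fun c w => by simp only [map_smul, gH.smul_right, smul_sub]; rfl }
  -- `f w` is self-adjoint because the sum in `inner_add_mem` and its diagonal terms are.
  have hf : ∀ w, IsSelfAdjoint (f w) := by
    intro w
    have hS := O.star_mem (hk.inner_add_mem p q u w)
    rw [star_add, star_add, star_add, O.star_mem (hk.inner_apply_self_mem p u),
      O.star_mem (hk.inner_apply_self_mem q w), gH.star_inner, gH.star_inner] at hS
    change star (gH.inner (k q p u) w - gH.inner u (k p q w)) = _ - _
    rw [star_sub, gH.star_inner, gH.star_inner]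
    linear_combination (norm := module) hS
  have hfv :=
    eq_zero_of_isSelfAdjoint_of_isSelfAdjoint_I_smul (hf v) (by simpa using hf (Complex.I • v))
  exact sub_eq_zero.mp hfv

section Bounds

variable {p q : X} {α β : ℝ}
  (hp : ∀ u : H, O.le (gH.inner (k p p u) u) ((α : ℂ) • gH.inner u u))
  (hq : ∀ u : H, O.le (gH.inner (k q q u) u) ((β : ℂ) • gH.inner u u))
include hp hq

/-- `inner_add_mem` at `u = h`, `v = -t • k q p h`. -/
theorem smul_inner_le (t : ℝ) (h : H) :
    O.le (((2 * t - t ^ 2 * β : ℝ) : ℂ) • gH.inner (k q p h) (k q p h))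
      ((α : ℂ) • gH.inner h h) := by
  set w := k q p h
  have hM := hk.inner_add_mem p q h (-(t : ℂ) • w)
  rw [map_smul, map_smul, gH.inner_smul_left, gH.inner_smul_left, hk.inner_apply_eq q p w h,
    gH.smul_right, gH.smul_right] at hM
  have hsum := O.add_mem (O.add_mem hM (hp h)) (O.smul_mem (sq_nonneg t) (hq w))
  unfold StarCone.le
  convert hsum using 1
  simp only [star_neg, Complex.star_def, Complex.conj_ofReal]
  push_cast
  module

theorem inner_le_mul (hβ : 0 < β) (h : H) :
    O.le (gH.inner (k q p h) (k q p h)) (((α * β : ℝ) : ℂ) • gH.inner h h) := by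
  have := O.smul_le_smul (hk.smul_inner_le hp hq β⁻¹ h) hβ.le
  have hβ1 : (β : ℂ) * ((2 * β⁻¹ - β⁻¹ ^ 2 * β : ℝ) : ℂ) = 1 := by
    have : (β : ℂ) ≠ 0 := by exact_mod_cast hβ.ne'
    push_cast
    field_simp
    ring
  rwa [smul_smul, smul_smul, hβ1, one_smul, mul_comm, ← Complex.ofReal_mul] at this

end Bounds

theorem apply_eq_zero_of_le_zero {p q : X} {α : ℝ} (hα : 0 ≤ α)
    (hp : ∀ u : H, O.le (gH.inner (k p p u) u) ((α : ℂ) • gH.inner u u))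
    (hq : ∀ u : H, O.le (gH.inner (k q q u) u) (((0 : ℝ) : ℂ) • gH.inner u u)) (v : H) :
    k p q v = 0 := by
  have hp' : ∀ u : H, O.le (gH.inner (k p p u) u) (((α + 1 : ℝ) : ℂ) • gH.inner u u) :=
    fun u => O.le_trans (hp u) (O.smul_le_smul_of_le (gH.inner_self_mem u) (by linarith))
  apply gH.eq_zero_of_inner_self_le_zero
  simpa using hk.inner_le_mul hq hp' (by linarith) v

end IsTwoPositive

end Kernel

theorem two_positive_kernel_bounded_general
    {Z : Type*} [AddCommGroup Z] [Module ℂ Z] [StarAddMonoid Z] [StarModule ℂ Z]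
    (O : StarCone Z)
    {H : Type*} [AddCommGroup H] [Module ℂ H] (gH : Gramian O H)
    {X : Type*}
    (k : X → X → (H →ₗ[ℂ] H))
    (h2pos : ∀ (x : Fin 2 → X) (h : Fin 2 → H),
      (∑ i : Fin 2, ∑ j : Fin 2, gH.inner (k (x i) (x j) (h j)) (h i)) ∈ O.pos)
    (x y : X) (a b : ℝ) (ha : 0 ≤ a) (hb : 0 ≤ b)
    (hax : ∀ h : H, O.le (gH.inner (k x x h) h) ((a : ℂ) • gH.inner h h))
    (hby : ∀ h : H, O.le (gH.inner (k y y h) h) ((b : ℂ) • gH.inner h h)) :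
    (∀ h : H, O.le (gH.inner (k y x h) (k y x h)) (((a * b : ℝ) : ℂ) • gH.inner h h)) ∧
      (∃ μ : ℝ, 0 ≤ μ ∧
        ∀ h : H, O.le (gH.inner (k y x h) (k y x h)) ((μ : ℂ) • gH.inner h h)) := by
  have hk : IsTwoPositive gH k := h2pos
  have bound : ∀ h : H,
      O.le (gH.inner (k y x h) (k y x h)) (((a * b : ℝ) : ℂ) • gH.inner h h) := by
    rcases hb.eq_or_lt with rfl | hb
    · intro h
      have hw : gH.inner (k y x h) (k y x h) = 0 := by
        rw [hk.inner_apply_eq x y, hk.apply_eq_zero_of_le_zero ha hax hby, gH.inner_zero_right]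
      simpa [hw] using O.le_refl 0
    · exact hk.inner_le_mul hax hby hb
  exact ⟨bound, a * b, mul_nonneg ha hb, bound⟩

/-- For a `2`-positive kernel `k`, if `[k(x,x)h,h] ≤ a[h,h]` and
`[k(y,y)h,h] ≤ b[h,h]` for all `h` (with `a, b ≥ 0`), then
`[k(y,x)h, k(y,x)h] ≤ a·b·[h,h]` for all `h`; in particular `k(y,x)` is bounded in the
sense of Loynes. -/
theorem two_positive_kernel_bounded
    {Z : Type*} [AddCommGroup Z] [Module ℂ Z] [StarAddMonoid Z] [StarModule ℂ Z]
    (O : StarCone Z)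
    {H : Type*} [AddCommGroup H] [Module ℂ H] (gH : Gramian O H)
    {X : Type*} [Nonempty X]
    (k : X → X → (H →ₗ[ℂ] H))
    (hadj : ∀ x y : X, Adjointable gH gH (k x y))
    (h2pos : ∀ (x : Fin 2 → X) (h : Fin 2 → H),
      (∑ i : Fin 2, ∑ j : Fin 2, gH.inner (k (x i) (x j) (h j)) (h i)) ∈ O.pos)
    (x y : X) (a b : ℝ) (ha : 0 ≤ a) (hb : 0 ≤ b)
    (hax : ∀ h : H, O.le (gH.inner (k x x h) h) ((a : ℂ) • gH.inner h h))
    (hby : ∀ h : H, O.le (gH.inner (k y y h) h) ((b : ℂ) • gH.inner h h)) :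
    (∀ h : H, O.le (gH.inner (k y x h) (k y x h)) (((a * b : ℝ) : ℂ) • gH.inner h h)) ∧
      (∃ μ : ℝ, 0 ≤ μ ∧
        ∀ h : H, O.le (gH.inner (k y x h) (k y x h)) ((μ : ℂ) • gH.inner h h)) :=
  two_positive_kernel_bounded_general O gH k h2pos x y a b ha hb hax hby
end
end

section
/- Let X be a nonempty set, Z an ordered *-space, H a VE-space over Z, and R a VE-space over Z whose underlying vector space is a linear subspace of the space of all functions X → H with pointwise operations. Then R is an H-reproducing kernel VE-space on X (i.e. there exists a Hermitian kernel k : X × X → L*(H) with kernel functions k_x h := k(·,x)h ∈ R and reproducing property [f(x),h]_H = [f, k_x h]_R for all f ∈ R, x ∈ X, h ∈ H) if and only if for every x ∈ X the evaluation operator E_x : R → H, E_x f = f(x), is adjointable as a linear map between the VE-spaces R and H. -/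
/-!
If every evaluation `E_x` has an adjoint `E_x*`, then `k(x, y) := E_x E_y*` is a reproducing
kernel: its kernel functions are `k_y h = E_y* h ∈ R`, the reproducing property is the adjoint
relation of `E_y`, and `k(y, x) = k(x, y)*` because `(E_y E_x*)* = E_x E_y*`. Conversely the
reproducing property says exactly that `h ↦ k_x h` is an adjoint of `E_x`.
-/

noncomputable section

/-- The evaluation operator at a point `x`, on a linear subspace of functions `X → H`. -/
def evalLM {X H : Type*} [AddCommGroup H] [Module ℂ H] (R : Submodule ℂ (X → H)) (x : X) :
    ↥R →ₗ[ℂ] H where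
  toFun f := (f : X → H) x
  map_add' f g := rfl
  map_smul' c f := rfl

section Adjoint

variable {Z : Type*} [AddCommGroup Z] [Module ℂ Z] [StarAddMonoid Z] [StarModule ℂ Z]
  {O : StarCone Z} {E F F' : Type*} [AddCommGroup E] [Module ℂ E] [AddCommGroup F] [Module ℂ F]
  [AddCommGroup F'] [Module ℂ F']

def IsAdjoint (gE : Gramian O E) (gF : Gramian O F) (T : E →ₗ[ℂ] F) (S : F →ₗ[ℂ] E) : Prop :=
  ∀ (e : E) (f : F), gF.inner (T e) f = gE.inner e (S f)

theorem IsAdjoint.comp_adjoint {gE : Gramian O E} {gF : Gramian O F} {gF' : Gramian O F'}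
    {T : E →ₗ[ℂ] F} {S : F →ₗ[ℂ] E} {T' : E →ₗ[ℂ] F'} {S' : F' →ₗ[ℂ] E}
    (hT : IsAdjoint gE gF T S) (hT' : IsAdjoint gE gF' T' S') :
    IsAdjoint gF' gF (T.comp S') (T'.comp S) := fun f' f =>
  calc gF.inner (T (S' f')) f = gE.inner (S' f') (S f) := hT _ _
    _ = star (gE.inner (S f) (S' f')) := gE.conj_symm _ _
    _ = star (gF'.inner (T' (S f)) f') := by rw [hT']
    _ = gF'.inner f' (T' (S f)) := (gF'.conj_symm _ _).symm

end Adjoint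

theorem reproducing_kernel_iff_evaluations_adjointable_general
    {Z : Type*} [AddCommGroup Z] [Module ℂ Z] [StarAddMonoid Z] [StarModule ℂ Z]
    (O : StarCone Z)
    {H : Type*} [AddCommGroup H] [Module ℂ H] (gH : Gramian O H)
    {X : Type*}
    (R : Submodule ℂ (X → H)) (gR : Gramian O ↥R) :
    (∃ k : X → X → (H →ₗ[ℂ] H),
      -- `k` has values adjointable operators and is Hermitian: `k(y,x) = k(x,y)*`
      (∀ x y : X, Adjointable gH gH (k x y)) ∧
      (∀ (x y : X) (f g : H), gH.inner (k y x f) g = gH.inner f (k x y g)) ∧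
      -- the kernel functions `k_x h = k(·,x)h` belong to `R` and reproduce
      ∃ hmem : ∀ (x : X) (h : H), (fun y => k y x h) ∈ R,
        ∀ (f : ↥R) (x : X) (h : H),
          gH.inner ((f : X → H) x) h = gR.inner f ⟨fun y => k y x h, hmem x h⟩) ↔
    (∀ x : X, Adjointable gR gH (evalLM R x)) := by
  constructor
  · rintro ⟨k, -, -, hmem, hrep⟩ x
    exact ⟨(LinearMap.pi fun y => k y x).codRestrict R (hmem x), (hrep · x)⟩
  · intro hadj
    choose S hS using hadj
    have hherm : ∀ x y : X,
        IsAdjoint gH gH ((evalLM R y).comp (S x)) ((evalLM R x).comp (S y)) :=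
      fun x y => IsAdjoint.comp_adjoint (hS y) (hS x)
    exact ⟨fun x y => (evalLM R x).comp (S y), fun x y => ⟨_, hherm y x⟩, hherm,
      fun x h => (S x h).2, fun f x h => hS x f h⟩

/-- a VE-space `R` of `H`-valued functions on `X` is an `H`-reproducing
kernel VE-space if and only if all evaluation operators `E_x : R → H` are adjointable. -/
theorem reproducing_kernel_iff_evaluations_adjointable
    {Z : Type*} [AddCommGroup Z] [Module ℂ Z] [StarAddMonoid Z] [StarModule ℂ Z]
    (O : StarCone Z)
    {H : Type*} [AddCommGroup H] [Module ℂ H] (gH : Gramian O H)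
    {X : Type*} [Nonempty X]
    (R : Submodule ℂ (X → H)) (gR : Gramian O ↥R) :
    (∃ k : X → X → (H →ₗ[ℂ] H),
      -- `k` has values adjointable operators and is Hermitian: `k(y,x) = k(x,y)*`
      (∀ x y : X, Adjointable gH gH (k x y)) ∧
      (∀ (x y : X) (f g : H), gH.inner (k y x f) g = gH.inner f (k x y g)) ∧
      -- the kernel functions `k_x h = k(·,x)h` belong to `R` and reproduce
      ∃ hmem : ∀ (x : X) (h : H), (fun y => k y x h) ∈ R,
        ∀ (f : ↥R) (x : X) (h : H),
          gH.inner ((f : X → H) x) h = gR.inner f ⟨fun y => k y x h, hmem x h⟩) ↔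
    (∀ x : X, Adjointable gR gH (evalLM R x)) :=
  reproducing_kernel_iff_evaluations_adjointable_general O gH R gR
end
end

section
/- Let X be a nonempty set, Z an ordered *-space, H a VE-space over Z, k : X × X → L*(H) a Hermitian kernel, and R an H-reproducing kernel VE-space on X with kernel k. Define V(x) : H → R by V(x)h = k_x h := k(·,x)h. Then for every x ∈ X the map V(x) is adjointable, with adjoint V(x)* : R → H given by V(x)* f = f(x), and k(y,x) = V(y)*V(x) for all x,y ∈ X; in particular (R, V) is a VE-space linearisation of k. -/
noncomputable section

namespace Gramian

variable {Z : Type*} [AddCommGroup Z] [Module ℂ Z] [StarAddMonoid Z] [StarModule ℂ Z]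
  {O : StarCone Z} {E F : Type*} [AddCommGroup E] [Module ℂ E] [AddCommGroup F] [Module ℂ F]

theorem inner_map_eq_inner_of_inner_eq_inner_map (gE : Gramian O E) (gF : Gramian O F)
    {T : E → F} {S : F → E} (hTS : ∀ e f, gE.inner (S f) e = gF.inner f (T e)) (e : E) (f : F) :
    gF.inner (T e) f = gE.inner e (S f) := by
  rw [gF.conj_symm, ← hTS, ← gE.conj_symm]

end Gramian

section ReproducingKernel

variable {Z : Type*} [AddCommGroup Z] [Module ℂ Z] [StarAddMonoid Z] [StarModule ℂ Z]
  {O : StarCone Z} {H : Type*} [AddCommGroup H] [Module ℂ H] {X : Type*}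

/-- The map `V(x) : h ↦ k_x h = k(·, x) h` into a space `R` containing all kernel functions. -/
def kernelSection (k : X → X → (H →ₗ[ℂ] H)) (R : Submodule ℂ (X → H))
    (hmem : ∀ (x : X) (h : H), (fun y => k y x h) ∈ R) (x : X) : H →ₗ[ℂ] R :=
  (LinearMap.pi fun y => k y x).codRestrict R (hmem x)

theorem inner_kernelSection (gH : Gramian O H) {k : X → X → (H →ₗ[ℂ] H)}
    {R : Submodule ℂ (X → H)} (gR : Gramian O R)
    {hmem : ∀ (x : X) (h : H), (fun y => k y x h) ∈ R}
    (hrepr : ∀ (f : R) (x : X) (h : H),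
      gH.inner ((f : X → H) x) h = gR.inner f ⟨fun y => k y x h, hmem x h⟩)
    (x : X) (h : H) (f : R) :
    gR.inner (kernelSection k R hmem x h) f = gH.inner h ((f : X → H) x) :=
  gH.inner_map_eq_inner_of_inner_eq_inner_map gR (fun h f => hrepr f x h) h f

end ReproducingKernel

theorem reproducing_kernel_space_is_linearisation_general
    {Z : Type*} [AddCommGroup Z] [Module ℂ Z] [StarAddMonoid Z] [StarModule ℂ Z]
    (O : StarCone Z)
    {H : Type*} [AddCommGroup H] [Module ℂ H] (gH : Gramian O H)
    {X : Type*}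
    (k : X → X → (H →ₗ[ℂ] H))
    (R : Submodule ℂ (X → H)) (gR : Gramian O ↥R)
    (hmem : ∀ (x : X) (h : H), (fun y => k y x h) ∈ R)
    (hrepr : ∀ (f : ↥R) (x : X) (h : H),
      gH.inner ((f : X → H) x) h = gR.inner f ⟨fun y => k y x h, hmem x h⟩) :
    ∃ V : X → (H →ₗ[ℂ] ↥R),
      -- `V(x) h` is the kernel function `k_x h`
      (∀ (x : X) (h : H), (V x h : X → H) = fun y => k y x h) ∧
      -- `V(x)` is adjointable, with adjoint the evaluation `f ↦ f(x)`
      (∀ (x : X) (h : H) (f : ↥R), gR.inner (V x h) f = gH.inner h ((f : X → H) x)) ∧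
      -- `k(y,x) = V(y)* V(x)`, the adjoint `V(y)*` being the evaluation at `y`
      (∀ (x y : X) (h : H), (V x h : X → H) y = k y x h) :=
  ⟨kernelSection k R hmem, fun _ _ => rfl, fun x h f => inner_kernelSection gH gR hrepr x h f,
    fun _ _ _ => rfl⟩

/-- for an `H`-reproducing kernel VE-space `R` on `X` with Hermitian kernel
`k`, the maps `V(x) : h ↦ k_x h = k(·,x)h` are adjointable with adjoint `f ↦ f(x)`, and
`k(y,x) = V(y)* V(x)`; in particular `(R, V)` is a VE-space linearisation of `k`. -/
theorem reproducing_kernel_space_is_linearisation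
    {Z : Type*} [AddCommGroup Z] [Module ℂ Z] [StarAddMonoid Z] [StarModule ℂ Z]
    (O : StarCone Z)
    {H : Type*} [AddCommGroup H] [Module ℂ H] (gH : Gramian O H)
    {X : Type*} [Nonempty X]
    (k : X → X → (H →ₗ[ℂ] H))
    (hadj : ∀ x y : X, Adjointable gH gH (k x y))
    (hherm : ∀ (x y : X) (f g : H), gH.inner (k y x f) g = gH.inner f (k x y g))
    (R : Submodule ℂ (X → H)) (gR : Gramian O ↥R)
    (hmem : ∀ (x : X) (h : H), (fun y => k y x h) ∈ R)
    (hrepr : ∀ (f : ↥R) (x : X) (h : H),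
      gH.inner ((f : X → H) x) h = gR.inner f ⟨fun y => k y x h, hmem x h⟩) :
    ∃ V : X → (H →ₗ[ℂ] ↥R),
      -- `V(x) h` is the kernel function `k_x h`
      (∀ (x : X) (h : H), (V x h : X → H) = fun y => k y x h) ∧
      -- `V(x)` is adjointable, with adjoint the evaluation `f ↦ f(x)`
      (∀ (x : X) (h : H) (f : ↥R), gR.inner (V x h) f = gH.inner h ((f : X → H) x)) ∧
      -- `k(y,x) = V(y)* V(x)`, the adjoint `V(y)*` being the evaluation at `y`
      (∀ (x y : X) (h : H), (V x h : X → H) y = k y x h) :=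
  reproducing_kernel_space_is_linearisation_general O gH k R gR hmem hrepr
end
end

section
/- Let Γ be a *-semigroup acting on a nonempty set X, Z an ordered *-space, H a VE-space over Z, and k : X × X → L*(H) a kernel. If (K, π, V) and (K', π', V') are two minimal Γ-invariant VE-space linearisations of k, then there exists a unitary (VE-space isomorphism) U : K → K' such that U π(ξ) = π'(ξ) U for all ξ ∈ Γ and U V(x) = V'(x) for all x ∈ X. -/
noncomputable section

/-! Both gramians agree on the generators, `[V x h, V y h'] = [h, k x y h'] = [V' x h, V' y h']`.
Presenting `K` and `K'` as quotients of the free module on `X × H`, definiteness makes the two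
kernels coincide, which yields a unitary `V x h ↦ V' x h`; by minimality, `V (ξ·x) = π ξ (V x)`
and `V' (ξ·x) = π' ξ (V' x)` force it to intertwine `π` and `π'`. -/

namespace Gramian

variable {Z : Type*} [AddCommGroup Z] [Module ℂ Z] [StarAddMonoid Z] [StarModule ℂ Z]
  {O : StarCone Z} {E F : Type*} [AddCommGroup E] [Module ℂ E] [AddCommGroup F] [Module ℂ F]

open Finsupp (linearCombination)

theorem add_left (g : Gramian O E) (x y z : E) :
    g.inner (x + y) z = g.inner x z + g.inner y z := by
  rw [g.conj_symm, g.add_right, star_add, ← g.conj_symm, ← g.conj_symm]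

theorem smul_left (g : Gramian O E) (c : ℂ) (x y : E) :
    g.inner (c • x) y = starRingEnd ℂ c • g.inner x y := by
  rw [g.conj_symm, g.smul_right, star_smul, ← g.conj_symm]
  rfl

def toSesq (g : Gramian O E) : E →ₗ⋆[ℂ] E →ₗ[ℂ] Z :=
  LinearMap.mk₂'ₛₗ (starRingEnd ℂ) (RingHom.id ℂ) g.inner g.add_left g.smul_left g.add_right
    g.smul_right

@[simp]
theorem toSesq_apply (g : Gramian O E) (x y : E) : g.toSesq x y = g.inner x y := rfl

theorem zero_left (g : Gramian O E) (x : E) : g.inner 0 x = 0 :=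
  g.toSesq.map_zero₂ x

theorem ker_eq_ker_of_inner_eq {M : Type*} [AddCommGroup M] [Module ℂ M]
    (gE : Gramian O E) (gF : Gramian O F) {A : M →ₗ[ℂ] E} {B : M →ₗ[ℂ] F}
    (hAB : ∀ c d, gF.inner (B c) (B d) = gE.inner (A c) (A d)) :
    LinearMap.ker A = LinearMap.ker B := by
  ext c
  simp only [LinearMap.mem_ker]
  constructor
  · intro hc
    exact gF.definite _ (by rw [hAB, hc, gE.zero_left])
  · intro hc
    exact gE.definite _ (by rw [← hAB, hc, gF.zero_left])

theorem inner_linearCombination_eq (gE : Gramian O E) (gF : Gramian O F) {ι : Type*}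
    {v : ι → E} {w : ι → F} (hvw : ∀ i j, gF.inner (w i) (w j) = gE.inner (v i) (v j))
    (c d : ι →₀ ℂ) :
    gF.inner (linearCombination ℂ w c) (linearCombination ℂ w d) =
      gE.inner (linearCombination ℂ v c) (linearCombination ℂ v d) := by
  suffices (gF.toSesq.comp (linearCombination ℂ w)).compl₂ (linearCombination ℂ w) =
      (gE.toSesq.comp (linearCombination ℂ v)).compl₂ (linearCombination ℂ v) from
    LinearMap.congr_fun₂ this c d
  refine Finsupp.lhom_ext fun i a => Finsupp.lhom_ext fun j b => ?_
  simp [Finsupp.linearCombination_single, hvw]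

theorem exists_linearEquiv_of_inner_eq (gE : Gramian O E) (gF : Gramian O F) {ι : Type*}
    {v : ι → E} {w : ι → F} (hv : Submodule.span ℂ (Set.range v) = ⊤)
    (hw : Submodule.span ℂ (Set.range w) = ⊤)
    (hvw : ∀ i j, gF.inner (w i) (w j) = gE.inner (v i) (v j)) :
    ∃ U : E ≃ₗ[ℂ] F, (∀ x y, gF.inner (U x) (U y) = gE.inner x y) ∧ ∀ i, U (v i) = w i := by
  set A := linearCombination ℂ v
  set B := linearCombination ℂ w
  have hA : Function.Surjective A := by
    rw [← LinearMap.range_eq_top, Finsupp.range_linearCombination, hv]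
  have hB : Function.Surjective B := by
    rw [← LinearMap.range_eq_top, Finsupp.range_linearCombination, hw]
  have hAB := inner_linearCombination_eq gE gF hvw
  let U := ((A.quotKerEquivOfSurjective hA).symm.trans
    (Submodule.quotEquivOfEq _ _ (ker_eq_ker_of_inner_eq gE gF hAB))).trans
    (B.quotKerEquivOfSurjective hB)
  have hUA : ∀ c, U (A c) = B c := fun c => by
    simp [U, LinearMap.quotKerEquivOfSurjective_symm_apply]
  refine ⟨U, fun x y => ?_, fun i => by simpa [A, B] using hUA (Finsupp.single i 1)⟩
  obtain ⟨c, rfl⟩ := hA x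
  obtain ⟨d, rfl⟩ := hA y
  rw [hUA, hUA, hAB]

end Gramian

theorem minimal_invariant_linearisation_unique_general
    {Z : Type*} [AddCommGroup Z] [Module ℂ Z] [StarAddMonoid Z] [StarModule ℂ Z]
    (O : StarCone Z)
    {H : Type*} [AddCommGroup H] [Module ℂ H] (gH : Gramian O H)
    {Γ : Type*}
    {X : Type*}
    (act : Γ → X → X)
    (k : X → X → (H →ₗ[ℂ] H))
    {K : Type*} [AddCommGroup K] [Module ℂ K] (gK : Gramian O K)
    {K' : Type*} [AddCommGroup K'] [Module ℂ K'] (gK' : Gramian O K')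
    (V : X → (H →ₗ[ℂ] K)) (Vadj : X → (K →ₗ[ℂ] H)) (π : Γ → (K →ₗ[ℂ] K))
    (V' : X → (H →ₗ[ℂ] K')) (V'adj : X → (K' →ₗ[ℂ] H)) (π' : Γ → (K' →ₗ[ℂ] K'))
    -- `(K, π, V)` is a minimal `Γ`-invariant VE-space linearisation of `k`
    (hV : ∀ (x : X) (e : H) (f : K), gK.inner (V x e) f = gH.inner e (Vadj x f))
    (hk : ∀ (x y : X) (h : H), k x y h = Vadj x (V y h))
    (hπV : ∀ (ξ : Γ) (x : X) (h : H), V (act ξ x) h = π ξ (V x h))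
    (hmin : Submodule.span ℂ {v : K | ∃ (x : X) (h : H), V x h = v} = ⊤)
    -- `(K', π', V')` is a minimal `Γ`-invariant VE-space linearisation of `k`
    (hV' : ∀ (x : X) (e : H) (f : K'), gK'.inner (V' x e) f = gH.inner e (V'adj x f))
    (hk' : ∀ (x y : X) (h : H), k x y h = V'adj x (V' y h))
    (hπ'V' : ∀ (ξ : Γ) (x : X) (h : H), V' (act ξ x) h = π' ξ (V' x h))
    (hmin' : Submodule.span ℂ {v : K' | ∃ (x : X) (h : H), V' x h = v} = ⊤) :
    ∃ U : K →ₗ[ℂ] K', Function.Bijective U ∧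
      (∀ f g : K, gK'.inner (U f) (U g) = gK.inner f g) ∧
      (∀ (ξ : Γ) (f : K), U (π ξ f) = π' ξ (U f)) ∧
      (∀ (x : X) (h : H), U (V x h) = V' x h) := by
  have hspan : Submodule.span ℂ (Set.range fun p : X × H => V p.1 p.2) = ⊤ := by
    simpa only [Set.range, Prod.exists] using hmin
  have hspan' : Submodule.span ℂ (Set.range fun p : X × H => V' p.1 p.2) = ⊤ := by
    simpa only [Set.range, Prod.exists] using hmin'
  obtain ⟨U, hU, hUV⟩ := Gramian.exists_linearEquiv_of_inner_eq gK gK' hspan hspan'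
    fun ⟨x, h⟩ ⟨y, h'⟩ => by rw [hV', hV, ← hk, ← hk']
  replace hUV : ∀ x h, U (V x h) = V' x h := fun x h => hUV (x, h)
  refine ⟨U, U.bijective, hU, fun ξ f => ?_, hUV⟩
  have hintertwine : U.toLinearMap ∘ₗ π ξ = π' ξ ∘ₗ U.toLinearMap :=
    LinearMap.ext_on_range hspan fun ⟨x, h⟩ => by
      change U (π ξ (V x h)) = π' ξ (U (V x h))
      rw [← hπV, hUV, hUV, hπ'V']
  exact LinearMap.congr_fun hintertwine f

/-- two minimal `Γ`-invariant VE-space linearisations `(K, π, V)` and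
`(K', π', V')` of the same kernel `k` are unitarily equivalent: there is a VE-space
isomorphism `U : K → K'` with `U π(ξ) = π'(ξ) U` and `U V(x) = V'(x)`. -/
theorem minimal_invariant_linearisation_unique
    {Z : Type*} [AddCommGroup Z] [Module ℂ Z] [StarAddMonoid Z] [StarModule ℂ Z]
    (O : StarCone Z)
    {H : Type*} [AddCommGroup H] [Module ℂ H] (gH : Gramian O H)
    {Γ : Type*} [Semigroup Γ] [StarMul Γ]
    {X : Type*} [Nonempty X]
    (act : Γ → X → X)
    (hact : ∀ (ξ η : Γ) (x : X), act ξ (act η x) = act (ξ * η) x)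
    (k : X → X → (H →ₗ[ℂ] H))
    {K : Type*} [AddCommGroup K] [Module ℂ K] (gK : Gramian O K)
    {K' : Type*} [AddCommGroup K'] [Module ℂ K'] (gK' : Gramian O K')
    (V : X → (H →ₗ[ℂ] K)) (Vadj : X → (K →ₗ[ℂ] H)) (π : Γ → (K →ₗ[ℂ] K))
    (V' : X → (H →ₗ[ℂ] K')) (V'adj : X → (K' →ₗ[ℂ] H)) (π' : Γ → (K' →ₗ[ℂ] K'))
    -- `(K, π, V)` is a minimal `Γ`-invariant VE-space linearisation of `k`
    (hV : ∀ (x : X) (e : H) (f : K), gK.inner (V x e) f = gH.inner e (Vadj x f))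
    (hk : ∀ (x y : X) (h : H), k x y h = Vadj x (V y h))
    (hπmul : ∀ ξ η : Γ, π (ξ * η) = (π ξ).comp (π η))
    (hπstar : ∀ (ξ : Γ) (f g : K), gK.inner (π ξ f) g = gK.inner f (π (star ξ) g))
    (hπV : ∀ (ξ : Γ) (x : X) (h : H), V (act ξ x) h = π ξ (V x h))
    (hmin : Submodule.span ℂ {v : K | ∃ (x : X) (h : H), V x h = v} = ⊤)
    -- `(K', π', V')` is a minimal `Γ`-invariant VE-space linearisation of `k`
    (hV' : ∀ (x : X) (e : H) (f : K'), gK'.inner (V' x e) f = gH.inner e (V'adj x f))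
    (hk' : ∀ (x y : X) (h : H), k x y h = V'adj x (V' y h))
    (hπ'mul : ∀ ξ η : Γ, π' (ξ * η) = (π' ξ).comp (π' η))
    (hπ'star : ∀ (ξ : Γ) (f g : K'), gK'.inner (π' ξ f) g = gK'.inner f (π' (star ξ) g))
    (hπ'V' : ∀ (ξ : Γ) (x : X) (h : H), V' (act ξ x) h = π' ξ (V' x h))
    (hmin' : Submodule.span ℂ {v : K' | ∃ (x : X) (h : H), V' x h = v} = ⊤) :
    ∃ U : K →ₗ[ℂ] K', Function.Bijective U ∧
      (∀ f g : K, gK'.inner (U f) (U g) = gK.inner f g) ∧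
      (∀ (ξ : Γ) (f : K), U (π ξ f) = π' ξ (U f)) ∧
      (∀ (x : X) (h : H), U (V x h) = V' x h) :=
  minimal_invariant_linearisation_unique_general O gH act k gK gK' V Vadj π V' V'adj π' hV hk hπV
    hmin hV' hk' hπ'V' hmin'
end
end
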